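/- Let p ≥ 1, ρ ∈ (0,1], E = ℝ^p (Euclidean) and F = E × E. Let Δ be a map from E-valued sequences (ℕ → E) to E-valued sequences such that: (a) if y is square-summable then Δ(y) is square-summable, and (b) if the sequence (ρ^{−k} y_k)_{k∈ℕ} is square-summable then so is (ρ^{−k} Δ(y)_k)_{k∈ℕ}. Let φ be a linear map from F-valued sequences to F-valued sequences, and let Φ̃ : ℓ²(ℕ, F) → ℓ²(ℕ, F) be a continuous linear operator such that for every finitely supported F-valued sequence x one has Φ̃(x) = (ρ^k · φ(ρ_+ x)_k)_{k∈ℕ}, where ρ_+ x := (ρ^k x_k)_{k∈ℕ}. Assume the hard IQC: for every square-summable y : ℕ → E and every T ∈ ℕ, writing x for the sequence k ↦ (y_k, Δ(y)_k), it holds that Σ_{k=0}^{T} ⟨x_k, φ(τ_T x)_k⟩_F ≥ 0, where τ_T x is x with all entries of index > T replaced by 0. Then for every square-summable y : ℕ → E, defining Δ_ρ(y) := (ρ^{−k} Δ(ρ_+ y)_k)_{k∈ℕ}, the sequence x̃ : k ↦ (y_k, Δ_ρ(y)_k) lies in ℓ²(ℕ, F) and ⟨x̃, Φ̃ x̃⟩_{ℓ²}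 ≥ 0. -/

import Mathlib

noncomputable section

abbrev E (p : ℕ) := EuclideanSpace ℝ (Fin p)
abbrev F (p : ℕ) := WithLp 2 (E p × E p)

/-- Bundle a pair of vectors into the (L²) product space `F p`. -/
def pairF {p : ℕ} (a b : E p) : F p := (WithLp.equiv 2 (E p × E p)).symm (a, b)


lemma pairF_smul {p : ℕ} (c : ℝ) (a b : E p) : c • pairF a b = pairF (c • a) (c • b) := rfl

lemma norm_pairF_sq {p : ℕ} (a b : E p) : ‖pairF a b‖ ^ 2 = ‖a‖ ^ 2 + ‖b‖ ^ 2 :=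
  WithLp.prod_norm_sq_eq_of_L2 _

lemma memℓp_two_iff {ι : Type*} {G : ι → Type*} [∀ i, NormedAddCommGroup (G i)] (f : ∀ i, G i) :
    Memℓp f 2 ↔ Summable (fun i => ‖f i‖ ^ 2) := by
  rw [memℓp_gen_iff (by norm_num)]
  have : ∀ i, ‖f i‖ ^ (2 : ENNReal).toReal = ‖f i‖ ^ 2 := fun i => by
    rw [show ((2:ENNReal)).toReal = ((2:ℕ):ℝ) by norm_num, Real.rpow_natCast]
  simp_rw [this]

theorem stmt_5 (p : ℕ) (hp : 1 ≤ p) (ρ : ℝ) (hρ0 : 0 < ρ) (hρ1 : ρ ≤ 1)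
    (Δ : (ℕ → E p) → (ℕ → E p))
    (ha : ∀ y : ℕ → E p, Memℓp y 2 → Memℓp (Δ y) 2)
    (hb : ∀ y : ℕ → E p, Memℓp (fun k => (ρ ^ k)⁻¹ • y k) 2 →
            Memℓp (fun k => (ρ ^ k)⁻¹ • Δ y k) 2)
    (φ : (ℕ → F p) →ₗ[ℝ] (ℕ → F p))
    (Phi : lp (fun _ : ℕ => F p) 2 →L[ℝ] lp (fun _ : ℕ => F p) 2)
    -- `Phi` coincides with `ρ₊ ∘ φ ∘ ρ₊` on finitely supported sequences
    (hPhi : ∀ (x : ℕ → F p) (hx : Memℓp x 2), (Function.support x).Finite →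
      ∀ k : ℕ, (Phi ⟨x, hx⟩ : ℕ → F p) k = (ρ ^ k) • φ (fun j => (ρ ^ j) • x j) k)
    -- hard IQC for `Δ`
    (hIQC : ∀ y : ℕ → E p, Memℓp y 2 → ∀ T : ℕ,
      0 ≤ ∑ k ∈ Finset.range (T + 1),
        (inner ℝ (pairF (y k) (Δ y k))
          (φ (fun j => if j ≤ T then pairF (y j) (Δ y j) else 0) k) : ℝ)) :
    ∀ y : ℕ → E p, Memℓp y 2 →
      Memℓp (fun k => pairF (y k) ((ρ ^ k)⁻¹ • Δ (fun j => (ρ ^ j) • y j) k)) 2 ∧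
      ∀ (xt : lp (fun _ : ℕ => F p) 2),
        (∀ k, xt k = pairF (y k) ((ρ ^ k)⁻¹ • Δ (fun j => (ρ ^ j) • y j) k)) →
        0 ≤ (inner ℝ xt (Phi xt) : ℝ) := by
  intro y hy
  have hρk : ∀ k : ℕ, (ρ : ℝ) ^ k ≠ 0 := fun k => (pow_pos hρ0 k).ne'
  set yρ : ℕ → E p := fun k => (ρ ^ k) • y k with hyρdef
  -- yρ is ℓ²
  have hyρ2 : Memℓp yρ 2 := by
    rw [memℓp_two_iff] at hy ⊢
    refine Summable.of_nonneg_of_le (fun k => by positivity) (fun k => ?_) hy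
    have h1 : ‖yρ k‖ ≤ ‖y k‖ := by
      rw [hyρdef]
      simp only [norm_smul, Real.norm_eq_abs, abs_pow, abs_of_pos hρ0]
      nlinarith [norm_nonneg (y k), pow_le_one₀ hρ0.le hρ1 (n := k), pow_pos hρ0 k]
    exact pow_le_pow_left₀ (norm_nonneg _) h1 2
  -- d is ℓ²
  set d : ℕ → E p := fun k => (ρ ^ k)⁻¹ • Δ yρ k with hddef
  have hd2 : Memℓp d 2 := by
    refine hb yρ ?_
    have : (fun k => (ρ ^ k)⁻¹ • yρ k) = y := by
      funext k; exact inv_smul_smul₀ (hρk k) (y k)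
    rw [this]; exact hy
  have hmem : Memℓp (fun k => pairF (y k) (d k)) 2 := by
    rw [memℓp_two_iff]
    have := (((memℓp_two_iff y).1 hy).add ((memℓp_two_iff d).1 hd2))
    refine this.congr (fun k => ?_)
    simp [norm_pairF_sq]
  refine ⟨hmem, ?_⟩
  intro xt hxt
  -- key smul identity
  have hsm : ∀ j : ℕ, (ρ ^ j) • (xt : ℕ → F p) j = pairF (yρ j) (Δ yρ j) := by
    intro j
    rw [hxt j, pairF_smul]
    congr 1
    exact smul_inv_smul₀ (hρk j) _
  -- truncations
  set S : ℕ → lp (fun _ : ℕ => F p) 2 := fun n => ∑ i ∈ Finset.range n, lp.single 2 i (xt i)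
    with hSdef
  have hSapp : ∀ n k, (S n : ℕ → F p) k = if k < n then xt k else 0 := by
    intro n k
    simp only [hSdef, lp.coeFn_sum, Finset.sum_apply, lp.single_apply, Pi.single_apply, Finset.sum_ite_eq, Finset.sum_dite_eq,
      Finset.mem_range]
  have htend : Filter.Tendsto S Filter.atTop (nhds xt) :=
    (lp.hasSum_single (by norm_num) xt).tendsto_sum_nat
  have hinner : Filter.Tendsto (fun n => (inner ℝ (S n) (Phi (S n)) : ℝ)) Filter.atTop
      (nhds (inner ℝ xt (Phi xt))) :=
    htend.inner ((Phi.continuous.tendsto xt).comp htend)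
  refine ge_of_tendsto hinner ?_
  rw [Filter.eventually_atTop]
  refine ⟨1, fun n hn => ?_⟩
  obtain ⟨T, rfl⟩ : ∃ T, n = T + 1 := ⟨n - 1, (Nat.succ_pred_eq_of_pos hn).symm⟩
  -- support finiteness
  have hfin : (Function.support ((S (T+1)) : ℕ → F p)).Finite := by
    apply Set.Finite.subset (Set.finite_Iio (T+1))
    intro k hk
    simp only [Function.mem_support, hSapp] at hk
    by_contra hkT
    simp only [Set.mem_Iio, not_lt] at hkT
    exact hk (if_neg (by omega))
  -- Phi on the truncation
  have hPhiS : ∀ k : ℕ, (Phi (S (T+1)) : ℕ → F p) k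
      = (ρ ^ k) • φ (fun j => if j ≤ T then pairF (yρ j) (Δ yρ j) else 0) k := by
    intro k
    have := hPhi ((S (T+1)) : ℕ → F p) (S (T+1)).2 hfin k
    rw [this]
    have harg : (fun j => (ρ ^ j) • ((S (T+1)) : ℕ → F p) j)
        = (fun j => if j ≤ T then pairF (yρ j) (Δ yρ j) else 0) := by
      funext j
      rw [hSapp]
      by_cases hj : j ≤ T
      · rw [if_pos (by omega), if_pos hj, hsm j]
      · rw [if_neg (by omega), if_neg hj, smul_zero]
    rw [harg]
  -- compute inner product as finite sum
  have hsum : (inner ℝ (S (T+1)) (Phi (S (T+1))) : ℝ)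
      = ∑ k ∈ Finset.range (T+1),
        (inner ℝ (pairF (yρ k) (Δ yρ k))
          (φ (fun j => if j ≤ T then pairF (yρ j) (Δ yρ j) else 0) k) : ℝ) := by
    rw [lp.inner_eq_tsum]
    rw [tsum_eq_sum (s := Finset.range (T+1)) ?_]
    · refine Finset.sum_congr rfl (fun k hk => ?_)
      rw [Finset.mem_range] at hk
      rw [hSapp, if_pos hk, hPhiS k, real_inner_smul_right, ← real_inner_smul_left, hsm k]
    · intro k hk
      rw [Finset.mem_range] at hk
      rw [hSapp, if_neg hk, inner_zero_left]
  rw [hsum]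
  exact hIQC yρ hyρ2 T
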